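/- arXiv:1305.4971 — 3 statements merged into one kernel-verified Lean document; each statement's English description precedes it below -/
import Mathlib

section
/- For every τ ≥ 1, the sum over all integers s ≥ 0 and all integers k lying in J_s of 2^(−τ·N(k) + τ·ξ·B(k)) is at most 2^(−τ)/(1 − 2^(−τ)). -/
open scoped Classical ENNReal
open Real Set Filter

/-- The quadratic function `Q(s) = q·s²`. -/
noncomputable def Qf (q : ℤ) (s : ℝ) : ℝ := (q : ℝ) * s ^ 2

/-- The half-open interval `I_s = [2^(Q(s)), 2^(Q(s)) + Q(s+1) − Q(s) + Ξ)`. -/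
noncomputable def Iset (q Ξ : ℤ) (s : ℝ) : Set ℝ :=
  Set.Ico ((2 : ℝ) ^ (Qf q s)) ((2 : ℝ) ^ (Qf q s) + Qf q (s + 1) - Qf q s + (Ξ : ℝ))

/-- The half-open interval `J_s = [2^(Q(s)) + Q(s+1) − Q(s) + Ξ, 2^(Q(s+1)))`. -/
noncomputable def Jset (q Ξ : ℤ) (s : ℝ) : Set ℝ :=
  Set.Ico ((2 : ℝ) ^ (Qf q s) + Qf q (s + 1) - Qf q s + (Ξ : ℝ)) ((2 : ℝ) ^ (Qf q (s + 1)))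

/-- The sequence `(x_j)` in `{0,1}`: `x_j = 0` iff `j + 1 ∈ I_s` for some integer `s ≥ 0`. -/
noncomputable def xseq (q Ξ : ℤ) (j : ℕ) : ℕ :=
  if ∃ s : ℕ, ((j : ℝ) + 1) ∈ Iset q Ξ (s : ℝ) then 0 else 1

/-- `N(k) = #{ j ∈ {0,…,k−1} : x_j = 0 }`, with `N(0) = 0`. -/
noncomputable def Nf (q Ξ : ℤ) (k : ℕ) : ℕ :=
  ((Finset.range k).filter (fun j => xseq q Ξ j = 0)).card

/-- `B(0) = 0`, `B(1) = 1`, and for `k ≥ 2`,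
`B(k) = 1 + #{ j ∈ {0,…,k−2} : x_j ≠ x_{j+1} }`. -/
noncomputable def Bf (q Ξ : ℤ) (k : ℕ) : ℕ :=
  if k = 0 then 0
  else 1 + ((Finset.range (k - 1)).filter (fun j => xseq q Ξ j ≠ xseq q Ξ (j + 1))).card

/-- The length `|J_s| = 2^(Q(s+1)) − 2^(Q(s)) − (Q(s+1) − Q(s) + Ξ)` of `J_s`. -/
noncomputable def Jlen (q Ξ : ℤ) (s : ℝ) : ℝ :=
  (2 : ℝ) ^ (Qf q (s + 1)) - (2 : ℝ) ^ (Qf q s) - (Qf q (s + 1) - Qf q s + (Ξ : ℝ))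

/-- `λ(s) = 1/|J_s|`. -/
noncomputable def lamf (q Ξ : ℤ) (s : ℝ) : ℝ := 1 / Jlen q Ξ s

/-- The two-variable series `Π(τ,λ) = Σ_{k≥0} 2^(−λk − τ·N(k) + τ·ξ·B(k))`, a sum in `[0,∞]`. -/
noncomputable def Pi2 (q Ξ : ℤ) (ξ τ lam : ℝ) : ℝ≥0∞ :=
  ∑' k : ℕ, ENNReal.ofReal
    ((2 : ℝ) ^ (-lam * (k : ℝ) - τ * (Nf q Ξ k : ℝ) + τ * ξ * (Bf q Ξ k : ℝ)))

/-!
The zero positions of `x` form the blocks `[2^Q(t) - 1, 2^Q(t) - 1 + ℓ t)` with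
`ℓ t = Q(t+1) - Q(t) + Ξ`, and `2^(q-1) ≥ q + 1 + Ξ` separates consecutive blocks by a gap.
For `k ∈ J_s` the prefix `x_0 … x_{k-1}` contains exactly the blocks `0, …, s` and ends in a
gap, so `N(k) = Q(s+1) + (s+1)Ξ` and `B(k) = 2s + 2`. As `J_s` has fewer than `2^Q(s+1)`
elements, its contribution is at most `2^(Q(s+1)(1-τ) - τ(s+1)(Ξ-2ξ)) ≤ 2^(-τ(s+1))`, and the
geometric series over `s` gives the bound.
-/

namespace Nat

variable {p : ℕ → Prop} [DecidablePred p] {u v : ℕ}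

theorem count_eq_count_of_forall_not (huv : u ≤ v) (h : ∀ j, u ≤ j → j < v → ¬p j) :
    count p v = count p u := by
  obtain ⟨n, rfl⟩ := Nat.exists_eq_add_of_le huv
  rw [count_add, add_eq_left,
    count_of_forall_not (p := fun k => p (u + k)) fun i hi => h _ (by omega) (by omega)]

theorem count_eq_count_add_of_forall (huv : u ≤ v) (h : ∀ j, u ≤ j → j < v → p j) :
    count p v = count p u + (v - u) := by
  obtain ⟨n, rfl⟩ := Nat.exists_eq_add_of_le huv
  rw [count_add, count_of_forall (p := fun k => p (u + k)) fun i hi => h _ (by omega) (by omega),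
    Nat.add_sub_cancel_left]

theorem count_succ_eq_count_add_one (huv : u ≤ v) (h : ∀ j, u ≤ j → j < v → ¬p j)
    (hv : p v) :
    count p (v + 1) = count p u + 1 := by
  rw [count_succ, if_pos hv, count_eq_count_of_forall_not huv h]

end Nat

section Blocks

variable (b ℓ : ℕ → ℕ)

def InBlocks (j : ℕ) : Prop := ∃ t, b t ≤ j ∧ j < b t + ℓ t

def SwitchesAt (j : ℕ) : Prop := ¬(InBlocks b ℓ j ↔ InBlocks b ℓ (j + 1))

variable {b ℓ} (hgap : ∀ t, b t + ℓ t < b (t + 1))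
include hgap

theorem monotone_of_add_lt_succ : Monotone b :=
  monotone_nat_of_le_succ fun t => (Nat.le_add_right _ _).trans (hgap t).le

theorem add_lt_of_add_lt_succ {t s : ℕ} (h : t < s) : b t + ℓ t < b s :=
  (hgap t).trans_le (monotone_of_add_lt_succ hgap h)

theorem not_inBlocks_of_lt {j : ℕ} (hj : j < b 0) : ¬InBlocks b ℓ j := by
  rintro ⟨t, ht, -⟩
  rcases Nat.eq_zero_or_pos t with rfl | ht0
  · omega
  · have := add_lt_of_add_lt_succ hgap ht0
    omega

theorem inBlocks_iff_of_mem_Ico {s j : ℕ} (hj : b s ≤ j) (hj' : j < b (s + 1)) :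
    InBlocks b ℓ j ↔ j < b s + ℓ s := by
  refine ⟨fun ⟨t, ht, ht'⟩ => ?_, fun h => ⟨s, hj, h⟩⟩
  rcases lt_trichotomy t s with hts | rfl | hst
  · have := add_lt_of_add_lt_succ hgap hts
    omega
  · exact ht'
  · have : b (s + 1) ≤ b t := monotone_of_add_lt_succ hgap hst
    omega

theorem not_inBlocks_of_mem_gap {s j : ℕ} (hj : b s + ℓ s ≤ j) (hj' : j < b (s + 1)) :
    ¬InBlocks b ℓ j :=
  (inBlocks_iff_of_mem_Ico hgap (by omega) hj').not.2 (by omega)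

theorem count_inBlocks_start (s : ℕ) :
    Nat.count (InBlocks b ℓ) (b s) = ∑ t ∈ Finset.range s, ℓ t := by
  induction s with
  | zero => exact Nat.count_of_forall_not fun j hj => not_inBlocks_of_lt hgap hj
  | succ s ih =>
    have hgap_s := hgap s
    have hend :
        Nat.count (InBlocks b ℓ) (b s + ℓ s) = Nat.count (InBlocks b ℓ) (b s) + ℓ s := by
      rw [Nat.count_eq_count_add_of_forall (Nat.le_add_right _ _)
        fun j hj hj' => (inBlocks_iff_of_mem_Ico hgap hj (by omega)).2 hj', Nat.add_sub_cancel_left]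
    rw [Finset.sum_range_succ, ← ih, ← hend]
    exact Nat.count_eq_count_of_forall_not hgap_s.le fun j hj hj' =>
      not_inBlocks_of_mem_gap hgap hj hj'

theorem count_inBlocks {s k : ℕ} (hk : b s + ℓ s ≤ k) (hk' : k ≤ b (s + 1)) :
    Nat.count (InBlocks b ℓ) k = ∑ t ∈ Finset.range (s + 1), ℓ t := by
  have hgap_s := hgap s
  rw [← count_inBlocks_start hgap, Nat.count_eq_count_of_forall_not hk fun j hj hj' =>
      not_inBlocks_of_mem_gap hgap hj (by omega),
    Nat.count_eq_count_of_forall_not hgap_s.le fun j hj hj' => not_inBlocks_of_mem_gap hgap hj hj']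

variable (hℓ : ∀ t, 0 < ℓ t)
include hℓ

theorem inBlocks_iff_of_mem_Icc {s j : ℕ} (hj : b s ≤ j) (hj' : j ≤ b (s + 1)) :
    InBlocks b ℓ j ↔ j < b s + ℓ s ∨ j = b (s + 1) := by
  rcases hj'.lt_or_eq with hj' | rfl
  · rw [inBlocks_iff_of_mem_Ico hgap hj hj']
    omega
  · have := hgap s
    exact iff_of_true ⟨s + 1, le_rfl, Nat.lt_add_of_pos_right (hℓ _)⟩ (Or.inr rfl)

theorem switchesAt_iff {s j : ℕ} (hj : b s ≤ j) (hj' : j < b (s + 1)) :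
    SwitchesAt b ℓ j ↔ j + 1 = b s + ℓ s ∨ j + 1 = b (s + 1) := by
  rw [SwitchesAt, inBlocks_iff_of_mem_Ico hgap hj hj',
    inBlocks_iff_of_mem_Icc hgap hℓ (by omega) hj']
  have := hgap s
  omega

theorem count_switchesAt_end (s : ℕ) :
    Nat.count (SwitchesAt b ℓ) (b s + ℓ s) = Nat.count (SwitchesAt b ℓ) (b s) + 1 := by
  have := hgap s
  have := hℓ s
  have hv : b s + ℓ s - 1 + 1 = b s + ℓ s := by omega
  rw [← hv]
  refine Nat.count_succ_eq_count_add_one (by omega) (fun j hj hj' => ?_) ?_ <;>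
    rw [switchesAt_iff hgap hℓ (s := s) (by omega) (by omega)] <;> omega

theorem count_switchesAt_of_mem_gap {s m : ℕ} (hm : b s + ℓ s ≤ m)
    (hm' : m ≤ b (s + 1) - 1) :
    Nat.count (SwitchesAt b ℓ) m = Nat.count (SwitchesAt b ℓ) (b s + ℓ s) :=
  Nat.count_eq_count_of_forall_not hm fun j hj hj' => by
    rw [switchesAt_iff hgap hℓ (s := s) (by omega) (by omega)]
    omega

theorem count_switchesAt_start (hb0 : b 0 = 0) (s : ℕ) :
    Nat.count (SwitchesAt b ℓ) (b s) = 2 * s := by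
  induction s with
  | zero => rw [hb0, Nat.count_zero, mul_zero]
  | succ s ih =>
    have := hgap s
    have hv : b (s + 1) - 1 + 1 = b (s + 1) := by omega
    rw [← hv, Nat.count_succ,
      if_pos ((switchesAt_iff hgap hℓ (s := s) (by omega) (by omega)).2 (by omega)),
      count_switchesAt_of_mem_gap hgap hℓ (by omega) le_rfl, count_switchesAt_end hgap hℓ, ih]
    ring

theorem count_switchesAt (hb0 : b 0 = 0) {s m : ℕ} (hm : b s + ℓ s ≤ m)
    (hm' : m < b (s + 1)) :
    Nat.count (SwitchesAt b ℓ) m = 2 * s + 1 := by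
  rw [count_switchesAt_of_mem_gap hgap hℓ hm (by omega), count_switchesAt_end hgap hℓ,
    count_switchesAt_start hgap hℓ hb0]

end Blocks

theorem two_pow_mul_sq_add_lt {n c : ℕ} (hn : 1 ≤ n) (hc : c + 1 ≤ 2 ^ (n - 1)) (t : ℕ) :
    2 ^ (n * t ^ 2) + 2 * n * t + c < 2 ^ (n * (t + 1) ^ 2) := by
  have hsplit : 2 ^ (n * (t + 1) ^ 2) = 2 ^ (n * t ^ 2) * (2 ^ (n - 1) * 2 ^ (2 * n * t + 1)) := by
    rw [← pow_add, ← pow_add]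
    congr 1
    zify [hn]
    ring
  have hlin : 2 * n * t + 2 ≤ 2 ^ (2 * n * t + 1) := Nat.lt_two_pow_self
  have hX : 1 ≤ 2 ^ (n * t ^ 2) := Nat.one_le_two_pow
  have hY : 2 * n * t + c + 2 ≤ 2 ^ (n - 1) * 2 ^ (2 * n * t + 1) :=
    calc 2 * n * t + c + 2 ≤ (c + 1) * (2 * n * t + 2) := by
          nlinarith [Nat.zero_le (2 * n * t * c)]
      _ ≤ _ := Nat.mul_le_mul hc hlin
  rw [hsplit]
  generalize 2 ^ (n * t ^ 2) = X at hX ⊢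
  generalize 2 ^ (n - 1) * 2 ^ (2 * n * t + 1) = Y at hY ⊢
  have hXY : X + Y ≤ X * Y + 1 := by
    obtain ⟨X, rfl⟩ := Nat.exists_eq_add_of_le' hX
    nlinarith [Nat.le_mul_of_pos_right X (show 0 < Y by omega)]
  omega

theorem ENNReal.tsum_ofReal_pow_succ {r : ℝ} (h0 : 0 ≤ r) (h1 : r < 1) :
    ∑' s : ℕ, ENNReal.ofReal r ^ (s + 1) = ENNReal.ofReal (r / (1 - r)) := by
  rw [ENNReal.tsum_geometric_add_one, ← ENNReal.ofReal_one, ← ENNReal.ofReal_sub _ h0,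
    ← ENNReal.ofReal_inv_of_pos (by linarith), ← ENNReal.ofReal_mul h0, div_eq_mul_inv]

noncomputable def blockStart (q : ℤ) (t : ℕ) : ℕ := 2 ^ (q.toNat * t ^ 2) - 1

noncomputable def blockLen (q Ξ : ℤ) (t : ℕ) : ℕ := 2 * q.toNat * t + (q + Ξ).toNat

section Concrete

variable {q Ξ : ℤ}

theorem natCast_blockStart_add_one (hq : 0 ≤ q) (t : ℕ) :
    ((blockStart q t + 1 : ℕ) : ℝ) = 2 ^ Qf q t := by
  rw [blockStart, Nat.sub_add_cancel Nat.one_le_two_pow, Qf, ← Int.toNat_of_nonneg hq]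
  norm_cast

theorem natCast_blockLen (hq : 0 ≤ q) (hqΞ : 0 ≤ q + Ξ) (t : ℕ) :
    (blockLen q Ξ t : ℝ) = Qf q (t + 1) - Qf q t + Ξ := by
  have hn : ((q.toNat : ℕ) : ℝ) = q := by exact_mod_cast Int.toNat_of_nonneg hq
  have hc : (((q + Ξ).toNat : ℕ) : ℝ) = q + Ξ := by exact_mod_cast Int.toNat_of_nonneg hqΞ
  rw [blockLen, Qf, Qf]
  push_cast
  rw [hn, hc]
  ring

theorem natCast_add_one_mem_Iset_iff (hq : 0 ≤ q) (hqΞ : 0 ≤ q + Ξ) (j t : ℕ) :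
    (j + 1 : ℝ) ∈ Iset q Ξ t ↔
      blockStart q t ≤ j ∧ j < blockStart q t + blockLen q Ξ t := by
  have hend : (2 : ℝ) ^ Qf q t + Qf q (t + 1) - Qf q t + Ξ =
      ((blockStart q t + 1 + blockLen q Ξ t : ℕ) : ℝ) := by
    rw [Nat.cast_add _ (blockLen q Ξ t), natCast_blockStart_add_one hq, natCast_blockLen hq hqΞ]
    ring
  rw [Iset, Set.mem_Ico, hend, ← natCast_blockStart_add_one hq]
  norm_cast
  omega

theorem natCast_mem_Jset_iff (hq : 0 ≤ q) (hqΞ : 0 ≤ q + Ξ) (k s : ℕ) :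
    (k : ℝ) ∈ Jset q Ξ s ↔
      blockStart q s + blockLen q Ξ s < k ∧ k ≤ blockStart q (s + 1) := by
  have hstart : (2 : ℝ) ^ Qf q s + Qf q (s + 1) - Qf q s + Ξ =
      ((blockStart q s + 1 + blockLen q Ξ s : ℕ) : ℝ) := by
    rw [Nat.cast_add _ (blockLen q Ξ s), natCast_blockStart_add_one hq, natCast_blockLen hq hqΞ]
    ring
  have hend : (2 : ℝ) ^ Qf q (s + 1) = ((blockStart q (s + 1) + 1 : ℕ) : ℝ) := by
    rw [natCast_blockStart_add_one hq]
    push_cast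
    rfl
  rw [Jset, Set.mem_Ico, hstart, hend]
  norm_cast
  omega

theorem xseq_eq_zero_iff (hq : 0 ≤ q) (hqΞ : 0 ≤ q + Ξ) (j : ℕ) :
    xseq q Ξ j = 0 ↔ InBlocks (blockStart q) (blockLen q Ξ) j := by
  simp only [xseq, natCast_add_one_mem_Iset_iff hq hqΞ, InBlocks]
  split_ifs with h <;> simp [h]

theorem Nf_eq_count (hq : 0 ≤ q) (hqΞ : 0 ≤ q + Ξ) (k : ℕ) :
    Nf q Ξ k = Nat.count (InBlocks (blockStart q) (blockLen q Ξ)) k := by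
  rw [Nf, Nat.count_eq_card_filter_range]
  simp only [xseq_eq_zero_iff hq hqΞ]

theorem Bf_eq_count (hq : 0 ≤ q) (hqΞ : 0 ≤ q + Ξ) {k : ℕ} (hk : k ≠ 0) :
    Bf q Ξ k = 1 + Nat.count (SwitchesAt (blockStart q) (blockLen q Ξ)) (k - 1) := by
  have hx01 : ∀ i, xseq q Ξ i = 0 ∨ xseq q Ξ i = 1 := fun i => by
    unfold xseq
    split_ifs <;> simp
  have hx : ∀ j,
      xseq q Ξ j ≠ xseq q Ξ (j + 1) ↔ SwitchesAt (blockStart q) (blockLen q Ξ) j := by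
    intro j
    rw [SwitchesAt, ← xseq_eq_zero_iff hq hqΞ, ← xseq_eq_zero_iff hq hqΞ]
    rcases hx01 j with h | h <;> rcases hx01 (j + 1) with h' | h' <;> simp [h, h']
  rw [Bf, if_neg hk, Nat.count_eq_card_filter_range]
  simp only [hx]

theorem blockStart_zero (q : ℤ) : blockStart q 0 = 0 := by
  simp [blockStart]

theorem blockLen_pos (hqΞ : 1 ≤ q + Ξ) (t : ℕ) : 0 < blockLen q Ξ t := by
  rw [blockLen]
  omega

theorem blockStart_add_blockLen_lt (hq : 1 ≤ q) (hqΞ : 0 ≤ q + Ξ)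
    (hpow : (q : ℝ) + 1 + Ξ ≤ 2 ^ ((q : ℝ) - 1)) (t : ℕ) :
    blockStart q t + blockLen q Ξ t < blockStart q (t + 1) := by
  have hn : ((q.toNat : ℕ) : ℝ) = q := by
    exact_mod_cast Int.toNat_of_nonneg (by omega : 0 ≤ q)
  have hc : (((q + Ξ).toNat : ℕ) : ℝ) = q + Ξ := by exact_mod_cast Int.toNat_of_nonneg hqΞ
  have hpowNat : (q + Ξ).toNat + 1 ≤ 2 ^ (q.toNat - 1) := by
    rw [← Nat.cast_le (α := ℝ)]
    push_cast
    rw [← Real.rpow_natCast, Nat.cast_sub (by omega), hn, hc, Nat.cast_one]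
    linarith
  have := two_pow_mul_sq_add_lt (by omega) hpowNat t
  have := Nat.one_le_two_pow (n := q.toNat * t ^ 2)
  rw [blockStart, blockStart, blockLen]
  omega

theorem sum_blockLen (hq : 0 ≤ q) (hqΞ : 0 ≤ q + Ξ) (m : ℕ) :
    (∑ t ∈ Finset.range m, blockLen q Ξ t : ℝ) = q * m ^ 2 + m * Ξ := by
  induction m with
  | zero => simp
  | succ m ih =>
    rw [Finset.sum_range_succ, ih, natCast_blockLen hq hqΞ, Qf, Qf]
    push_cast
    ring

variable (hq : 1 ≤ q) (hqΞ : 1 ≤ q + Ξ) (hpow : (q : ℝ) + 1 + Ξ ≤ 2 ^ ((q : ℝ) - 1))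
include hq hqΞ hpow

theorem Nf_of_mem_Jset {s k : ℕ} (hk : (k : ℝ) ∈ Jset q Ξ s) :
    (Nf q Ξ k : ℝ) = q * (s + 1) ^ 2 + (s + 1) * Ξ := by
  rw [natCast_mem_Jset_iff (by omega) (by omega)] at hk
  rw [Nf_eq_count (by omega) (by omega),
    count_inBlocks (blockStart_add_blockLen_lt hq (by omega) hpow) hk.1.le hk.2]
  push_cast
  rw [sum_blockLen (by omega) (by omega)]
  push_cast
  ring

theorem Bf_of_mem_Jset {s k : ℕ} (hk : (k : ℝ) ∈ Jset q Ξ s) : Bf q Ξ k = 2 * s + 2 := by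
  rw [natCast_mem_Jset_iff (by omega) (by omega)] at hk
  rw [Bf_eq_count (by omega) (by omega) (by omega),
    count_switchesAt (blockStart_add_blockLen_lt hq (by omega) hpow) (blockLen_pos hqΞ)
      (blockStart_zero q) (s := s) (by omega) (by omega)]
  ring

theorem tsum_Jset_le {ξ τ : ℝ} (hτ : 1 ≤ τ) (hξ : 1 ≤ (Ξ : ℝ) - 2 * ξ) (s : ℕ) :
    (∑' k : ℕ, if (k : ℝ) ∈ Jset q Ξ s then
        ENNReal.ofReal ((2 : ℝ) ^ (-τ * (Nf q Ξ k : ℝ) + τ * ξ * (Bf q Ξ k : ℝ)))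
      else 0) ≤
      ENNReal.ofReal (2 ^ (-τ)) ^ (s + 1) := by
  set M := blockStart q (s + 1) + 1
  have hterm : ∀ k : ℕ, (if (k : ℝ) ∈ Jset q Ξ s then
        ENNReal.ofReal ((2 : ℝ) ^ (-τ * (Nf q Ξ k : ℝ) + τ * ξ * (Bf q Ξ k : ℝ)))
      else 0) ≤
      if k < M then ENNReal.ofReal (2 ^ (-τ * (s + 1) - Qf q (s + 1))) else 0 := by
    intro k
    split_ifs with hk hkM
    · refine ENNReal.ofReal_le_ofReal (Real.rpow_le_rpow_of_exponent_le one_le_two ?_)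
      rw [Nf_of_mem_Jset hq hqΞ hpow hk, Bf_of_mem_Jset hq hqΞ hpow hk, Qf]
      push_cast
      have hq0 : (0 : ℝ) ≤ q := by exact_mod_cast (by omega : 0 ≤ q)
      have hs : (0 : ℝ) ≤ s := s.cast_nonneg
      nlinarith [mul_nonneg (mul_nonneg hq0 (sq_nonneg ((s : ℝ) + 1))) (sub_nonneg.2 hτ),
        mul_le_mul_of_nonneg_left hξ (by positivity : (0 : ℝ) ≤ τ * (s + 1))]
    · exact absurd ((natCast_mem_Jset_iff (by omega) (by omega) k s).1 hk).2 (by omega)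
    · exact zero_le
    · exact le_rfl
  calc _ ≤ _ := ENNReal.tsum_le_tsum hterm
    _ = M * ENNReal.ofReal (2 ^ (-τ * (s + 1) - Qf q (s + 1))) := by
      rw [tsum_eq_sum (s := Finset.range M) fun k hk => if_neg (by simpa using hk),
        Finset.sum_congr rfl fun k hk => if_pos (Finset.mem_range.1 hk), Finset.sum_const,
        Finset.card_range, nsmul_eq_mul]
    _ = ENNReal.ofReal (2 ^ (-τ)) ^ (s + 1) := by
      rw [← ENNReal.ofReal_natCast, ← ENNReal.ofReal_mul (by positivity),
        natCast_blockStart_add_one (by omega), ← Real.rpow_add two_pos, ← ENNReal.ofReal_pow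
        (by positivity), ← Real.rpow_natCast, ← Real.rpow_mul zero_le_two]
      push_cast
      ring_nf

end Concrete

theorem stmt12_general (Ξ q : ℤ) (hq : 3 ≤ q) (hqΞ : 1 ≤ q + Ξ)
    (hpow : (q : ℝ) + 1 + (Ξ : ℝ) ≤ (2 : ℝ) ^ ((q : ℝ) - 1))
    (ξ : ℝ) (hξ1 : 1 ≤ (Ξ : ℝ) - 2 * ξ) :
    ∀ τ : ℝ, 1 ≤ τ →
      (∑' s : ℕ, ∑' k : ℕ,
          if (k : ℝ) ∈ Jset q Ξ (s : ℝ) then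
            ENNReal.ofReal ((2 : ℝ) ^ (-τ * (Nf q Ξ k : ℝ) + τ * ξ * (Bf q Ξ k : ℝ)))
          else 0) ≤
        ENNReal.ofReal ((2 : ℝ) ^ (-τ) / (1 - (2 : ℝ) ^ (-τ))) := by
  intro τ hτ
  calc _ ≤ ∑' s : ℕ, ENNReal.ofReal (2 ^ (-τ)) ^ (s + 1) :=
        ENNReal.tsum_le_tsum fun s => tsum_Jset_le (by omega) hqΞ hpow hτ hξ1 s
    _ = _ := ENNReal.tsum_ofReal_pow_succ (by positivity)
        (Real.rpow_lt_one_of_one_lt_of_neg one_lt_two (by linarith))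

theorem stmt12 (Ξ q : ℤ) (hq : 3 ≤ q) (hqΞ : 1 ≤ q + Ξ)
    (hpow : (q : ℝ) + 1 + (Ξ : ℝ) ≤ (2 : ℝ) ^ ((q : ℝ) - 1))
    (ξ : ℝ) (hξ1 : 1 ≤ (Ξ : ℝ) - 2 * ξ) (hξ2 : (Ξ : ℝ) - 2 * ξ ≤ 2) :
    ∀ τ : ℝ, 1 ≤ τ →
      (∑' s : ℕ, ∑' k : ℕ,
          if (k : ℝ) ∈ Jset q Ξ (s : ℝ) then
            ENNReal.ofReal ((2 : ℝ) ^ (-τ * (Nf q Ξ k : ℝ) + τ * ξ * (Bf q Ξ k : ℝ)))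
          else 0) ≤
        ENNReal.ofReal ((2 : ℝ) ^ (-τ) / (1 - (2 : ℝ) ^ (-τ))) :=
  stmt12_general Ξ q hq hqΞ hpow ξ hξ1
end

section
/- For every real s ≥ 0 one has 2^(−Q(s+1)) ≤ λ(s) ≤ 2·2^(−Q(s+1)) ≤ 1/4; equivalently, 2^(Q(s+1)−1) ≤ |J_s| ≤ 2^(Q(s+1)). -/
open scoped Classical ENNReal
open Real Set Filter

/-! Write `D = Q(s+1) - Q(s) ≥ q`. Since `2^x` grows faster than `x`, the hypothesis
`q + 1 + Ξ ≤ 2^(q-1)` propagates to `D + 1 + Ξ ≤ 2^(D-1)`, whence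
`2^Q(s) + D + Ξ ≤ 2^Q(s) · (D + 1 + Ξ) ≤ 2^(Q(s+1) - 1)`: the part subtracted from `2^Q(s+1)`
in `|J_s|` is at most half of it. -/

lemma one_add_half_le_two_rpow {x : ℝ} (hx : 0 ≤ x) : 1 + x / 2 ≤ (2 : ℝ) ^ x := by
  have hexp := Real.add_one_le_exp (Real.log 2 * x)
  have hlog : (1 / 2 : ℝ) * x ≤ Real.log 2 * x :=
    mul_le_mul_of_nonneg_right (by linarith [Real.log_two_gt_d9]) hx
  rw [Real.rpow_def_of_pos two_pos]
  linarith

lemma add_le_two_rpow_sub_one_of_le {a b c : ℝ} (hc : 2 ≤ a + c)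
    (ha : a + c ≤ (2 : ℝ) ^ (a - 1)) (hab : a ≤ b) : b + c ≤ (2 : ℝ) ^ (b - 1) := by
  have hgrowth := one_add_half_le_two_rpow (sub_nonneg.mpr hab)
  calc b + c ≤ (a + c) * (1 + (b - a) / 2) := by nlinarith
    _ ≤ (2 : ℝ) ^ (a - 1) * (2 : ℝ) ^ (b - a) := by gcongr
    _ = (2 : ℝ) ^ (b - 1) := by rw [← Real.rpow_add two_pos]; ring_nf

lemma Qf_nonneg {q : ℤ} (hq : 0 ≤ q) (s : ℝ) : 0 ≤ Qf q s := by
  unfold Qf; positivity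

lemma Qf_succ_sub_Qf (q : ℤ) (s : ℝ) : Qf q (s + 1) - Qf q s = q * (2 * s + 1) := by
  unfold Qf; ring

lemma le_Qf_succ_sub_Qf {q : ℤ} (hq : 0 ≤ q) {s : ℝ} (hs : 0 ≤ s) :
    (q : ℝ) ≤ Qf q (s + 1) - Qf q s := by
  have hq' : (0 : ℝ) ≤ q := by exact_mod_cast hq
  rw [Qf_succ_sub_Qf]; nlinarith

section Jlen

variable {Ξ q : ℤ} {s : ℝ}

lemma Jlen_le_two_rpow (hq : 0 ≤ q) (hqΞ : 0 ≤ q + Ξ) (hs : 0 ≤ s) :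
    Jlen q Ξ s ≤ (2 : ℝ) ^ Qf q (s + 1) := by
  have hD := le_Qf_succ_sub_Qf hq hs
  have hqΞ' : (0 : ℝ) ≤ q + Ξ := by exact_mod_cast hqΞ
  have hpos : 0 < (2 : ℝ) ^ Qf q s := Real.rpow_pos_of_pos two_pos _
  unfold Jlen; linarith

lemma two_rpow_sub_one_le_Jlen (hq : 0 ≤ q) (hqΞ : 1 ≤ q + Ξ)
    (hpow : (q : ℝ) + 1 + (Ξ : ℝ) ≤ (2 : ℝ) ^ ((q : ℝ) - 1)) (hs : 0 ≤ s) :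
    (2 : ℝ) ^ (Qf q (s + 1) - 1) ≤ Jlen q Ξ s := by
  set D := Qf q (s + 1) - Qf q s with hDdef
  have hqD := le_Qf_succ_sub_Qf hq hs
  have hqΞ' : (1 : ℝ) ≤ q + Ξ := by exact_mod_cast hqΞ
  have hD : D + (1 + Ξ) ≤ (2 : ℝ) ^ (D - 1) :=
    add_le_two_rpow_sub_one_of_le (by linarith) (by linarith) hqD
  have hone : 1 ≤ (2 : ℝ) ^ Qf q s := Real.one_le_rpow one_le_two (Qf_nonneg hq s)
  have hsum : (2 : ℝ) ^ Qf q s + (D + Ξ) ≤ (2 : ℝ) ^ (Qf q (s + 1) - 1) :=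
    calc (2 : ℝ) ^ Qf q s + (D + Ξ) ≤ (2 : ℝ) ^ Qf q s * (D + (1 + Ξ)) := by
          nlinarith [mul_nonneg (sub_nonneg.mpr hone) (by linarith : (0 : ℝ) ≤ D + Ξ)]
      _ ≤ (2 : ℝ) ^ Qf q s * (2 : ℝ) ^ (D - 1) := by gcongr
      _ = (2 : ℝ) ^ (Qf q (s + 1) - 1) := by rw [← Real.rpow_add two_pos, hDdef]; ring_nf
  have hdouble : (2 : ℝ) ^ Qf q (s + 1) = 2 * (2 : ℝ) ^ (Qf q (s + 1) - 1) := by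
    rw [Real.rpow_sub two_pos, Real.rpow_one]; ring
  unfold Jlen
  linarith

end Jlen

lemma two_rpow_neg_le_one_div_of_le {x y : ℝ} (h : y ≤ (2 : ℝ) ^ x) (hy : 0 < y) :
    (2 : ℝ) ^ (-x) ≤ 1 / y := by
  rw [Real.rpow_neg zero_le_two, ← one_div]
  exact one_div_le_one_div_of_le hy h

lemma one_div_le_two_mul_two_rpow_neg_of_le {x y : ℝ} (h : (2 : ℝ) ^ (x - 1) ≤ y) :
    1 / y ≤ 2 * (2 : ℝ) ^ (-x) := by
  have hpos : 0 < (2 : ℝ) ^ (x - 1) := Real.rpow_pos_of_pos two_pos _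
  have hinv : 2 * (2 : ℝ) ^ (-x) = 1 / (2 : ℝ) ^ (x - 1) := by
    rw [Real.rpow_sub two_pos, Real.rpow_one, Real.rpow_neg zero_le_two]
    field_simp
  rw [hinv]
  exact one_div_le_one_div_of_le hpos h

lemma two_mul_two_rpow_neg_le_quarter {x : ℝ} (hx : 3 ≤ x) : 2 * (2 : ℝ) ^ (-x) ≤ 1 / 4 := by
  have h : (2 : ℝ) ^ (-x) ≤ (2 : ℝ) ^ (-3 : ℝ) :=
    Real.rpow_le_rpow_of_exponent_le one_le_two (by linarith)
  norm_num at h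
  linarith

theorem stmt15 (Ξ q : ℤ) (hq : 3 ≤ q) (hqΞ : 1 ≤ q + Ξ)
    (hpow : (q : ℝ) + 1 + (Ξ : ℝ) ≤ (2 : ℝ) ^ ((q : ℝ) - 1)) :
    ∀ s : ℝ, 0 ≤ s →
      (2 : ℝ) ^ (-Qf q (s + 1)) ≤ lamf q Ξ s ∧
      lamf q Ξ s ≤ 2 * (2 : ℝ) ^ (-Qf q (s + 1)) ∧
      2 * (2 : ℝ) ^ (-Qf q (s + 1)) ≤ 1 / 4 ∧
      (2 : ℝ) ^ (Qf q (s + 1) - 1) ≤ Jlen q Ξ s ∧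
      Jlen q Ξ s ≤ (2 : ℝ) ^ (Qf q (s + 1)) := by
  intro s hs
  have hq0 : 0 ≤ q := by omega
  have hlo := two_rpow_sub_one_le_Jlen hq0 hqΞ hpow hs
  have hhi := Jlen_le_two_rpow hq0 (by omega : 0 ≤ q + Ξ) hs
  have hJpos : 0 < Jlen q Ξ s := (Real.rpow_pos_of_pos two_pos _).trans_le hlo
  have hQ : 3 ≤ Qf q (s + 1) := by
    have hq' : (3 : ℝ) ≤ q := by exact_mod_cast hq
    unfold Qf; nlinarith
  exact ⟨two_rpow_neg_le_one_div_of_le hhi hJpos, one_div_le_two_mul_two_rpow_neg_of_le hlo,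
    two_mul_two_rpow_neg_le_quarter hQ, hlo, hhi⟩
end

section
/- The ratio N(k)/k converges to 0 as k → ∞. -/
open scoped Classical ENNReal
open Real Set Filter

/-!
Only `O(log k)` of the intervals `I_s` start below `k`, since `2 ^ Q(s) ≥ 2 ^ s`, and `I_s`
contains `O(s)` integers, so `N(k) = O((log k)²)`.
-/

open Finset

lemma Qf_natCast (q s : ℕ) : Qf q s = ((q * s ^ 2 : ℕ) : ℝ) := by
  unfold Qf; push_cast; ring

lemma Iset_natCast (q : ℕ) (Ξ : ℤ) (s : ℕ) :
    Iset q Ξ s = Set.Ico ((2 ^ (q * s ^ 2) : ℕ) : ℝ)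
      ((2 ^ (q * s ^ 2) : ℕ) + ((q * (2 * s + 1) + Ξ : ℤ) : ℝ)) := by
  rw [Iset, Qf_natCast, Real.rpow_natCast, add_sub_assoc, add_assoc]
  unfold Qf
  push_cast
  ring_nf

lemma card_filter_succ_mem_Ico_le (k a : ℕ) (m : ℤ) :
    #((range k).filter fun j : ℕ => (j : ℝ) + 1 ∈ Set.Ico (a : ℝ) (a + m)) ≤ m.toNat := by
  have hsub : (range k).filter (fun j : ℕ => (j : ℝ) + 1 ∈ Set.Ico (a : ℝ) (a + m)) ⊆
      Ico (a - 1) (a - 1 + m.toNat) := by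
    intro j hj
    simp only [Finset.mem_filter, Set.mem_Ico] at hj
    have hlow : a ≤ j + 1 := by exact_mod_cast hj.2.1
    have hhigh : (j : ℤ) + 1 < a + m := by exact_mod_cast hj.2.2
    have := Int.self_le_toNat m
    rw [Finset.mem_Ico]
    omega
  calc _ ≤ #(Ico (a - 1) (a - 1 + m.toNat)) := Finset.card_le_card hsub
    _ = m.toNat := by simp

lemma exists_le_log_of_xseq_eq_zero {q : ℕ} (hq : 1 ≤ q) (Ξ : ℤ) {j k : ℕ} (hjk : j < k)
    (hx : xseq q Ξ j = 0) : ∃ s ≤ Nat.log 2 k, (j : ℝ) + 1 ∈ Iset q Ξ s := by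
  unfold xseq at hx
  split_ifs at hx with h
  obtain ⟨s, hs⟩ := h
  refine ⟨s, ?_, hs⟩
  rw [Iset_natCast] at hs
  have hstart : 2 ^ (q * s ^ 2) ≤ j + 1 := by exact_mod_cast hs.1
  have hs_le : s ≤ q * s ^ 2 :=
    (Nat.le_self_pow two_ne_zero s).trans (Nat.le_mul_of_pos_left _ hq)
  apply Nat.le_log_of_pow_le one_lt_two
  calc 2 ^ s ≤ 2 ^ (q * s ^ 2) := Nat.pow_le_pow_right two_pos hs_le
    _ ≤ k := by omega

lemma Nf_le_mul_log_add_one_sq {q : ℕ} (hq : 1 ≤ q) (Ξ : ℤ) (k : ℕ) :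
    Nf q Ξ k ≤ 2 * (q + Ξ.toNat) * (Nat.log 2 k + 1) ^ 2 := by
  set S := Nat.log 2 k
  have hsub : {j ∈ range k | xseq q Ξ j = 0} ⊆
      (range (S + 1)).biUnion fun s =>
        (range k).filter fun j : ℕ => (j : ℝ) + 1 ∈ Iset q Ξ s := by
    intro j hj
    rw [Finset.mem_filter, Finset.mem_range] at hj
    obtain ⟨s, hsS, hs⟩ := exists_le_log_of_xseq_eq_zero hq Ξ hj.1 hj.2
    simp only [Finset.mem_biUnion, Finset.mem_range, Finset.mem_filter]
    exact ⟨s, Nat.lt_succ_of_le hsS, hj.1, hs⟩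
  have hcard (s : ℕ) (hs : s ∈ range (S + 1)) :
      #((range k).filter fun j : ℕ => (j : ℝ) + 1 ∈ Iset q Ξ s) ≤
        (q + Ξ.toNat) * (2 * S + 1) := by
    simp only [Iset_natCast]
    refine (card_filter_succ_mem_Ico_le k _ _).trans ?_
    rw [Finset.mem_range] at hs
    rw [Int.toNat_le]
    push_cast
    have := Int.self_le_toNat Ξ
    nlinarith
  calc Nf q Ξ k ≤ ∑ s ∈ range (S + 1),
        #((range k).filter fun j : ℕ => (j : ℝ) + 1 ∈ Iset q Ξ s) :=
        (Finset.card_le_card hsub).trans card_biUnion_le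
    _ ≤ ∑ s ∈ range (S + 1), (q + Ξ.toNat) * (2 * S + 1) := sum_le_sum hcard
    _ ≤ 2 * (q + Ξ.toNat) * (S + 1) ^ 2 := by
        rw [sum_const, card_range, smul_eq_mul]
        nlinarith

lemma tendsto_logb_add_one_sq_div_atTop :
    Tendsto (fun x : ℝ => (Real.logb 2 x + 1) ^ 2 / x) atTop (nhds 0) := by
  have hlog2 : Real.log 2 ≠ 0 := (Real.log_pos one_lt_two).ne'
  have h (n : ℕ) := Real.tendsto_pow_log_div_mul_add_atTop 1 0 n one_ne_zero
  have H := ((h 2).const_mul ((1 / Real.log 2) ^ 2)).add ((h 1).const_mul (2 / Real.log 2))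
    |>.add (h 0)
  simp only [mul_zero, add_zero] at H
  refine H.congr fun x => ?_
  rcases eq_or_ne x 0 with rfl | hx
  · simp
  · rw [Real.logb]
    field_simp
    ring

theorem stmt19_general (Ξ q : ℤ) (hq : 3 ≤ q) :
    Filter.Tendsto (fun k : ℕ => (Nf q Ξ k : ℝ) / (k : ℝ)) Filter.atTop (nhds 0) := by
  lift q to ℕ using by omega
  set C : ℝ := 2 * (q + Ξ.toNat) with hC
  have hbound :=
    (tendsto_logb_add_one_sq_div_atTop.const_mul C).comp tendsto_natCast_atTop_atTop
  rw [mul_zero] at hbound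
  refine squeeze_zero (fun k => by positivity) (fun k => ?_) hbound
  have hN : (Nf q Ξ k : ℝ) ≤ C * ((Nat.log 2 k : ℝ) + 1) ^ 2 := by
    rw [hC]
    exact_mod_cast Nf_le_mul_log_add_one_sq (q := q) (by omega) Ξ k
  calc (Nf q Ξ k : ℝ) / k ≤ C * ((Nat.log 2 k : ℝ) + 1) ^ 2 / k := by gcongr
    _ ≤ C * (Real.logb 2 k + 1) ^ 2 / k := by gcongr; exact Real.natLog_le_logb k 2
    _ = C * ((Real.logb 2 k + 1) ^ 2 / k) := mul_div_assoc ..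

theorem stmt19 (Ξ q : ℤ) (hq : 3 ≤ q) (hqΞ : 1 ≤ q + Ξ)
    (hpow : (q : ℝ) + 1 + (Ξ : ℝ) ≤ (2 : ℝ) ^ ((q : ℝ) - 1)) :
    Filter.Tendsto (fun k : ℕ => (Nf q Ξ k : ℝ) / (k : ℝ)) Filter.atTop (nhds 0) :=
  stmt19_general Ξ q hq
end
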